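/- Let k = Q(√5), O_k = Z[(1+√5)/2], u = (1+√5)/2. There does not exist α ∈ Z[ζ5] with α·ᾱ = 4 + u, even though 4 + u is totally positive in O_k. -/

import Mathlib

noncomputable section
open Complex ComplexConjugate

/-- A primitive fifth root of unity. -/
def ζ : ℂ := Complex.exp (2 * Real.pi * Complex.I / 5)

/-- The fundamental unit `(1 + √5)/2` of `k = ℚ(√5)`. -/
def u5 : ℂ := (1 + Real.sqrt 5) / 2

/-- The ring of integers `𝒪 = ℤ[ζ₅]` of `F = ℚ(ζ₅)`, as a subalgebra of `ℂ`. -/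
def OF : Subalgebra ℤ ℂ := Algebra.adjoin ℤ {ζ}

/-- The ring of integers `𝒪_k = ℤ[(1+√5)/2]` of `k = ℚ(√5)`, as a subalgebra of `ℂ`. -/
def Ok : Subalgebra ℤ ℂ := Algebra.adjoin ℤ {u5}

/-- The field `F = ℚ(ζ₅)`, as a `ℚ`-subalgebra of `ℂ`. -/
def Fq : Subalgebra ℚ ℂ := Algebra.adjoin ℚ {ζ}

/-- An element of `𝒪_k` is totally positive if every real embedding sends it to a
positive real. -/
def TotPos (x : Ok) : Prop := ∀ f : Ok →+* ℝ, 0 < f x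

/-! Write `α = a + bζ + cζ² + dζ³`. Since `ζ̄ = ζ⁴` and `ζ² + ζ³ = 2 cos (4π/5) = -u`, the
product `αᾱ` equals `Q₁ + Q₂ u` for two integral quadratic forms `Q₁, Q₂` in `a, b, c, d`. As `u`
is the irrational golden ratio, `αᾱ = 4 + u` forces `Q₁ = 4` and `Q₂ = 1`, and these two
equations have no common solution already modulo `5`. -/

open Polynomial in
theorem Polynomial.exists_eq_sum_smul_pow_of_mem_adjoin {R A : Type*} [CommRing R] [CommRing A]
    [Algebra R A] {x : A} {q : R[X]} (hq : q.Monic) (hqx : aeval x q = 0) {y : A}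
    (hy : y ∈ Algebra.adjoin R {x}) :
    ∃ c : ℕ → R, y = ∑ i ∈ Finset.range q.natDegree, c i • x ^ i := by
  obtain ⟨p, rfl⟩ : ∃ p, aeval x p = y := by
    simpa [Algebra.adjoin_singleton_eq_range_aeval] using hy
  rcases eq_or_ne q 1 with rfl | hq1
  · have : Subsingleton A := subsingleton_of_zero_eq_one (by simpa using hqx.symm)
    exact ⟨0, Subsingleton.elim _ _⟩
  refine ⟨(p %ₘ q).coeff, ?_⟩
  rw [← aeval_modByMonic_eq_self_of_root hqx]
  exact aeval_eq_sum_range' (natDegree_modByMonic_lt p hq hq1) x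

theorem isPrimitiveRoot_ζ : IsPrimitiveRoot ζ 5 := by
  simpa [ζ] using Complex.isPrimitiveRoot_exp 5 (by norm_num)

theorem ζ_pow_five : ζ ^ 5 = 1 := isPrimitiveRoot_ζ.pow_eq_one

theorem sum_pow_ζ : 1 + ζ + ζ ^ 2 + ζ ^ 3 + ζ ^ 4 = 0 := by
  simpa [Finset.sum_range_succ] using isPrimitiveRoot_ζ.geom_sum_eq_zero (by norm_num)

open Polynomial in
theorem exists_eq_of_mem_OF {x : ℂ} (hx : x ∈ OF) :
    ∃ a b c d : ℤ, x = a + b * ζ + c * ζ ^ 2 + d * ζ ^ 3 := by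
  have hroot : aeval ζ (cyclotomic 5 ℤ) = 0 := by
    have := isPrimitiveRoot_ζ.isRoot_cyclotomic (by norm_num)
    rwa [IsRoot, ← map_cyclotomic_int, eval_map] at this
  obtain ⟨c, rfl⟩ := exists_eq_sum_smul_pow_of_mem_adjoin (cyclotomic.monic 5 ℤ) hroot hx
  refine ⟨c 0, c 1, c 2, c 3, ?_⟩
  simp [natDegree_cyclotomic, Nat.totient_prime Nat.prime_five, Finset.sum_range_succ]

theorem conj_ζ : conj ζ = ζ ^ 4 := by
  have hnorm : ζ * conj ζ = 1 := by
    rw [Complex.mul_conj, Complex.normSq_eq_norm_sq, isPrimitiveRoot_ζ.norm'_eq_one (by norm_num)]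
    norm_num
  linear_combination ζ ^ 4 * hnorm - conj ζ * ζ_pow_five

theorem ζ_sq_add_ζ_cube : ζ ^ 2 + ζ ^ 3 = -u5 := by
  have hconj : conj (ζ ^ 2) = ζ ^ 3 := by
    rw [map_pow, conj_ζ]; linear_combination ζ ^ 3 * ζ_pow_five
  have hsq : ζ ^ 2 = Complex.exp ((4 * Real.pi / 5 : ℝ) * Complex.I) := by
    rw [ζ, ← Complex.exp_nat_mul]
    push_cast; ring_nf
  have hre : (ζ ^ 2).re = Real.cos (4 * Real.pi / 5) := by
    rw [hsq, Complex.exp_ofReal_mul_I_re]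
  have hcos : Real.cos (4 * Real.pi / 5) = - ((1 + Real.sqrt 5) / 4) := by
    rw [show 4 * Real.pi / 5 = Real.pi - Real.pi / 5 by ring, Real.cos_pi_sub, Real.cos_pi_div_five]
  rw [← hconj, Complex.add_conj, hre, hcos, u5]
  push_cast; ring

theorem Irrational.eq_and_eq_of_intCast_add_intCast_mul {x : ℝ} (hx : Irrational x)
    {a b c d : ℤ} (h : a + b * x = c + d * x) : a = c ∧ b = d := by
  have hbd : b = d := by
    by_contra hbd
    refine (irrational_iff_ne_rational x).1 hx (c - a) (b - d) (sub_ne_zero.2 hbd) ?_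
    have : ((b : ℝ) - d) ≠ 0 := by exact_mod_cast sub_ne_zero.2 hbd
    push_cast
    field_simp
    linear_combination h
  subst hbd
  exact ⟨by exact_mod_cast add_right_cancel h, rfl⟩

theorem eq_and_eq_of_intCast_add_intCast_mul_u5 {a b c d : ℤ} (h : a + b * u5 = c + d * u5) :
    a = c ∧ b = d := by
  refine Real.goldenRatio_irrational.eq_and_eq_of_intCast_add_intCast_mul ?_
  have hu5 : u5 = (Real.goldenRatio : ℂ) := by simp [u5]
  rw [hu5] at h
  exact_mod_cast h

theorem int_combination_ζ_mul_conj (a b c d : ℤ) :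
    (a + b * ζ + c * ζ ^ 2 + d * ζ ^ 3) * conj (a + b * ζ + c * ζ ^ 2 + d * ζ ^ 3 : ℂ) =
      ((a ^ 2 + b ^ 2 + c ^ 2 + d ^ 2 - (a * b + b * c + c * d) : ℤ) : ℂ) +
        ((a * b + b * c + c * d - (a * c + a * d + b * d) : ℤ) : ℂ) * u5 := by
  have hconj : conj (a + b * ζ + c * ζ ^ 2 + d * ζ ^ 3 : ℂ) =
      a + b * ζ ^ 4 + c * ζ ^ 3 + d * ζ ^ 2 := by
    simp only [map_add, map_mul, map_pow, map_intCast, conj_ζ]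
    linear_combination (c * ζ ^ 3 + d * (ζ ^ 7 + ζ ^ 2)) * ζ_pow_five
  rw [hconj]
  push_cast
  linear_combination
    (b ^ 2 + c ^ 2 + d ^ 2 + (b * c + c * d) * ζ + b * d * ζ ^ 2 : ℂ) * ζ_pow_five
    + (a * b + b * c + c * d : ℂ) * sum_pow_ζ
    + (a * c + a * d + b * d - (a * b + b * c + c * d) : ℂ) * ζ_sq_add_ζ_cube

theorem quadratic_forms_ne_four_one (a b c d : ℤ) :
    ¬(a ^ 2 + b ^ 2 + c ^ 2 + d ^ 2 - (a * b + b * c + c * d) = 4 ∧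
      a * b + b * c + c * d - (a * c + a * d + b * d) = 1) := by
  have mod_five : ∀ a b c d : ZMod 5,
      a ^ 2 + b ^ 2 + c ^ 2 + d ^ 2 - (a * b + b * c + c * d) = 4 →
        a * b + b * c + c * d - (a * c + a * d + b * d) ≠ 1 := by
    decide
  rintro ⟨h4, h1⟩
  apply mod_five a b c d
  · simpa using congrArg (Int.cast : ℤ → ZMod 5) h4
  · simpa using congrArg (Int.cast : ℤ → ZMod 5) h1

/-- `4 + u = (9+√5)/2` is totally positive in `𝒪_k`, yet there is no `α ∈ ℤ[ζ₅]` with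
`α·ᾱ = 4 + u`. -/
theorem stmt_16 :
    (0 < (9 + Real.sqrt 5) / 2 ∧ 0 < (9 - Real.sqrt 5) / 2) ∧
    ¬ ∃ α : OF, (α : ℂ) * conj (α : ℂ) = 4 + u5 := by
  have hsqrt : Real.sqrt 5 < 9 := by
    rw [Real.sqrt_lt' (by norm_num)]; norm_num
  refine ⟨⟨by positivity, by linarith⟩, ?_⟩
  rintro ⟨α, hα⟩
  obtain ⟨a, b, c, d, hαabcd⟩ := exists_eq_of_mem_OF α.2
  rw [hαabcd, int_combination_ζ_mul_conj] at hα
  refine quadratic_forms_ne_four_one a b c d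
    (eq_and_eq_of_intCast_add_intCast_mul_u5 (c := 4) (d := 1) ?_)
  rw [hα]; push_cast; ring
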